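/- arXiv:2404.04357 — 5 statements merged into one kernel-verified Lean document; each statement's English description precedes it below -/
import Mathlib

section
/- Fix Q : 𝒳 × 𝒜 → ℝ and let {P^{Q,μ}} be a family of row-stochastic kernels on 𝒳 indexed by probability distributions μ, satisfying Σ_{x'} |P^{Q,μ₁}(x,x') − P^{Q,μ₂}(x,x')| ≤ L_p ‖μ₁−μ₂‖_TV for all x with 0 < L_p < 1. Suppose μ̃ is a probability distribution with μ̃ = μ̃ P^{Q,μ̃}, and P^{Q,μ̃} satisfies the Doeblin condition P^{Q,μ̃}(x,x') ≥ β ν(x') for a probability distribution ν and β ∈ ((1+L_p)/2, 1). Let 0 < ρ^μ ≤ 1 and define the iteration μ_{k+1} = μ_k + ρ^μ (μ_k P^{Q,μ_k} − μ_k) starting from a probability distribution μ₀. Then for all k ≥ 0, ‖μ_{k+1} − μ̃‖_TV ≤ (1 − ρ^μ(2β − 1 − L_p)) ‖μ_k − μ̃‖_TV, and 1 − ρ^μ(2β−1−L_p) ∈ (0,1). -/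
open Finset

/-- A probability distribution on a finite set. -/
def IsProb {𝒳 : Type*} [Fintype 𝒳] (μ : 𝒳 → ℝ) : Prop :=
  (∀ x, 0 ≤ μ x) ∧ ∑ x, μ x = 1

/-- Total variation norm: `‖m‖_TV = sup_{A ⊆ 𝒳} |Σ_{x∈A} m(x)|`. -/
noncomputable def tvNorm {𝒳 : Type*} [Fintype 𝒳] (m : 𝒳 → ℝ) : ℝ :=
  ⨆ A : Finset 𝒳, |∑ x ∈ A, m x|

/-- A row-stochastic kernel on a finite set. -/
def IsKernel {𝒳 : Type*} [Fintype 𝒳] (P : 𝒳 → 𝒳 → ℝ) : Prop :=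
  (∀ x x', 0 ≤ P x x') ∧ ∀ x, ∑ x', P x x' = 1

/-!
Write `e = μ_k - μ̃`. Since `μ̃` is fixed by `P^{Q,μ̃}`, the new error splits as
`(1 - ρ) e + ρ (e P^{Q,μ̃} + μ_k (P^{Q,μ_k} - P^{Q,μ̃}))`. As `e` has total mass zero, the
Doeblin minorisation lets us replace `P^{Q,μ̃}` by the sub-stochastic kernel `P^{Q,μ̃} - β ν`
of mass `1 - β`, so the middle term contracts the `ℓ¹` norm by `1 - β`; the last term is at
most `L_p ‖e‖_TV` in `ℓ¹` by the Lipschitz hypothesis. For signed measures of mass zero,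
`‖·‖_TV` is half the `ℓ¹` norm, which gives the rate `1 - ρ (β - L_p / 2)`; this is at most
`1 - ρ (2β - 1 - L_p)` because `β < 1 + L_p / 2`.
-/

open Matrix

section TotalVariation

variable {ι : Type*} [Fintype ι]

lemma abs_sum_le_tvNorm (m : ι → ℝ) (A : Finset ι) : |∑ i ∈ A, m i| ≤ tvNorm m :=
  le_ciSup (f := fun A : Finset ι => |∑ i ∈ A, m i|) (Set.finite_range _).bddAbove A

lemma tvNorm_nonneg (m : ι → ℝ) : 0 ≤ tvNorm m :=
  (abs_nonneg _).trans (abs_sum_le_tvNorm m ∅)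

lemma tvNorm_eq_half_sum_abs {m : ι → ℝ} (hm : ∑ i, m i = 0) :
    tvNorm m = (∑ i, |m i|) / 2 := by
  classical
  apply le_antisymm
  · refine ciSup_le fun A => ?_
    have hcompl : ∑ i ∈ A, m i = -∑ i ∈ Aᶜ, m i := by
      rw [eq_neg_iff_add_eq_zero, sum_add_sum_compl, hm]
    have hA := abs_sum_le_sum_abs m A
    have hAc := abs_sum_le_sum_abs m Aᶜ
    have hsplit := sum_add_sum_compl A fun i => |m i|
    rw [hcompl, abs_neg] at *
    linarith
  · set A := univ.filter fun i => 0 ≤ m i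
    have hpos : ∑ i, |m i| = 2 * ∑ i ∈ A, m i := by
      have habs : ∀ a : ℝ, |a| = 2 * (if 0 ≤ a then a else 0) - a := fun a => by
        split_ifs with ha
        · rw [abs_of_nonneg ha]; ring
        · rw [abs_of_neg (not_le.mp ha)]; ring
      simp only [habs, sum_sub_distrib, ← mul_sum, hm, sum_filter, A, sub_zero]
    rw [hpos, mul_div_cancel_left₀ _ two_ne_zero]
    exact (le_abs_self _).trans (abs_sum_le_tvNorm m A)

end TotalVariation

section L1

variable {ι κ : Type*} [Fintype ι] [Fintype κ]

lemma sum_abs_vecMul_le (m : ι → ℝ) (K : Matrix ι κ ℝ) :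
    ∑ j, |(m ᵥ* K) j| ≤ ∑ i, |m i| * ∑ j, |K i j| :=
  calc ∑ j, |(m ᵥ* K) j| ≤ ∑ j, ∑ i, |m i| * |K i j| :=
        sum_le_sum fun j _ => (abs_sum_le_sum_abs _ _).trans_eq (by simp only [abs_mul])
    _ = ∑ i, |m i| * ∑ j, |K i j| := by simp only [mul_sum]; exact sum_comm

lemma sum_abs_vecMul_le_of_doeblin {m : ι → ℝ} (hm : ∑ i, m i = 0) {K : Matrix ι κ ℝ}
    (hK : ∀ i, ∑ j, K i j = 1) {ν : κ → ℝ} (hν : ∑ j, ν j = 1) {β : ℝ}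
    (hDoe : ∀ i j, β * ν j ≤ K i j) :
    ∑ j, |(m ᵥ* K) j| ≤ (1 - β) * ∑ i, |m i| := by
  set R : Matrix ι κ ℝ := K - of fun _ j => β * ν j
  have hmR : m ᵥ* K = m ᵥ* R := by
    ext j
    simp only [R, vecMul_apply_eq_sum, Matrix.sub_apply, of_apply, mul_sub, sum_sub_distrib,
      ← mul_assoc, ← sum_mul, hm, zero_mul, sub_zero]
  have hRrow : ∀ i, ∑ j, |R i j| = 1 - β := fun i => by
    simp only [R, Matrix.sub_apply, of_apply, abs_of_nonneg (sub_nonneg.mpr (hDoe i _)),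
      sum_sub_distrib, hK, ← mul_sum, hν, mul_one]
  calc ∑ j, |(m ᵥ* K) j| ≤ ∑ i, |m i| * ∑ j, |R i j| := hmR ▸ sum_abs_vecMul_le m R
    _ = (1 - β) * ∑ i, |m i| := by simp only [hRrow, ← sum_mul, mul_comm]

end L1

section Distributions

variable {ι : Type*} [Fintype ι]

lemma IsKernel.sum_vecMul {K : Matrix ι ι ℝ} (hK : IsKernel K) (μ : ι → ℝ) :
    ∑ j, (μ ᵥ* K) j = ∑ i, μ i := by
  simp only [vecMul_apply_eq_sum]
  rw [sum_comm]
  simp only [← mul_sum, hK.2, mul_one]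

lemma IsProb.vecMul {μ : ι → ℝ} (hμ : IsProb μ) {K : Matrix ι ι ℝ} (hK : IsKernel K) :
    IsProb (μ ᵥ* K) :=
  ⟨fun j => sum_nonneg fun i _ => mul_nonneg (hμ.1 i) (hK.1 i j), (hK.sum_vecMul μ).trans hμ.2⟩

lemma IsProb.add_smul_sub {μ ν : ι → ℝ} (hμ : IsProb μ) (hν : IsProb ν) {ρ : ℝ} (hρ0 : 0 ≤ ρ)
    (hρ1 : ρ ≤ 1) : IsProb (μ + ρ • (ν - μ)) := by
  refine ⟨fun i => ?_, ?_⟩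
  · have := hμ.1 i; have := hν.1 i
    simp only [Pi.add_apply, Pi.smul_apply, Pi.sub_apply, smul_eq_mul]
    nlinarith
  · simp only [Pi.add_apply, Pi.smul_apply, Pi.sub_apply, smul_eq_mul, sum_add_distrib, ← mul_sum,
      sum_sub_distrib, hμ.2, hν.2]
    ring

lemma IsProb.sum_sub_eq_zero {μ ν : ι → ℝ} (hμ : IsProb μ) (hν : IsProb ν) :
    ∑ i, (μ - ν) i = 0 := by
  simp only [Pi.sub_apply, sum_sub_distrib, hμ.2, hν.2, sub_self]

theorem tvNorm_add_smul_vecMul_sub_sub_le {μ μt ν : ι → ℝ} {K Kt : Matrix ι ι ℝ} {L β ρ : ℝ}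
    (hμ : IsProb μ) (hμt : IsProb μt) (hK : IsKernel K) (hKt : ∀ i, ∑ j, Kt i j = 1)
    (hfix : μt ᵥ* Kt = μt) (hν : ∑ j, ν j = 1) (hDoe : ∀ i j, β * ν j ≤ Kt i j)
    (hlip : ∀ i, ∑ j, |K i j - Kt i j| ≤ L * tvNorm (μ - μt)) (hρ0 : 0 ≤ ρ) (hρ1 : ρ ≤ 1) :
    tvNorm (μ + ρ • (μ ᵥ* K - μ) - μt) ≤ (1 - ρ * (β - L / 2)) * tvNorm (μ - μt) := by
  set e := μ - μt
  have hsplit : μ + ρ • (μ ᵥ* K - μ) - μt = (1 - ρ) • e + ρ • (e ᵥ* Kt + μ ᵥ* (K - Kt)) := by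
    rw [sub_vecMul, vecMul_sub, hfix]
    module
  have hdoe : ∑ j, |(e ᵥ* Kt) j| ≤ (1 - β) * ∑ i, |e i| :=
    sum_abs_vecMul_le_of_doeblin (hμ.sum_sub_eq_zero hμt) hKt hν hDoe
  have hdrift : ∑ j, |(μ ᵥ* (K - Kt)) j| ≤ L * tvNorm e :=
    calc ∑ j, |(μ ᵥ* (K - Kt)) j| ≤ ∑ i, |μ i| * ∑ j, |(K - Kt) i j| := sum_abs_vecMul_le _ _
      _ ≤ ∑ i, μ i * (L * tvNorm e) := sum_le_sum fun i _ => by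
          rw [abs_of_nonneg (hμ.1 i)]; exact mul_le_mul_of_nonneg_left (hlip i) (hμ.1 i)
      _ = L * tvNorm e := by rw [← sum_mul, hμ.2, one_mul]
  have hl1 : ∑ j, |((1 - ρ) • e + ρ • (e ᵥ* Kt + μ ᵥ* (K - Kt))) j|
      ≤ (1 - ρ) * ∑ j, |e j| + ρ * (∑ j, |(e ᵥ* Kt) j| + ∑ j, |(μ ᵥ* (K - Kt)) j|) := by
    simp only [mul_sum, ← sum_add_distrib]
    refine sum_le_sum fun j _ => (abs_add_le _ _).trans ?_
    simp only [Pi.smul_apply, Pi.add_apply, smul_eq_mul, abs_mul, abs_of_nonneg hρ0,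
      abs_of_nonneg (sub_nonneg.mpr hρ1)]
    gcongr
    exact abs_add_le _ _
  have hnew := (hμ.add_smul_sub (hμ.vecMul hK) hρ0 hρ1).sum_sub_eq_zero hμt
  rw [hsplit] at hnew ⊢
  rw [tvNorm_eq_half_sum_abs hnew, tvNorm_eq_half_sum_abs (hμ.sum_sub_eq_zero hμt)] at *
  have := mul_le_mul_of_nonneg_left (add_le_add hdoe hdrift) hρ0
  linarith

end Distributions

theorem mu_iteration_contraction_general {𝒳 : Type*} [Fintype 𝒳]
    (P : (𝒳 → ℝ) → 𝒳 → 𝒳 → ℝ)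
    (Lp : ℝ) (hLp : 0 < Lp ∧ Lp < 1)
    (hker : ∀ μ, IsProb μ → IsKernel (P μ))
    (hlip : ∀ μ₁ μ₂, IsProb μ₁ → IsProb μ₂ → ∀ x,
      ∑ x', |P μ₁ x x' - P μ₂ x x'| ≤ Lp * tvNorm (fun y => μ₁ y - μ₂ y))
    (μt : 𝒳 → ℝ) (hμt : IsProb μt)
    (hfix : ∀ x', (∑ x, μt x * P μt x x') = μt x')
    (ν : 𝒳 → ℝ) (hν : IsProb ν)
    (β : ℝ) (hβ : (1 + Lp) / 2 < β ∧ β < 1)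
    (hDoe : ∀ x x', β * ν x' ≤ P μt x x')
    (ρ : ℝ) (hρ : 0 < ρ ∧ ρ ≤ 1)
    (μseq : ℕ → 𝒳 → ℝ) (hμ0 : IsProb (μseq 0))
    (hrec : ∀ k x', μseq (k + 1) x' =
      μseq k x' + ρ * ((∑ x, μseq k x * P (μseq k) x x') - μseq k x')) :
    (∀ k, tvNorm (fun x => μseq (k + 1) x - μt x) ≤
        (1 - ρ * (2 * β - 1 - Lp)) * tvNorm (fun x => μseq k x - μt x)) ∧
      (1 - ρ * (2 * β - 1 - Lp)) ∈ Set.Ioo (0 : ℝ) 1 := by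
  obtain ⟨hLp0, -⟩ := hLp
  obtain ⟨hβ1, hβ2⟩ := hβ
  obtain ⟨hρ0, hρ1⟩ := hρ
  have hstep : ∀ k, μseq (k + 1) = μseq k + ρ • (μseq k ᵥ* P (μseq k) - μseq k) :=
    fun k => funext (hrec k)
  have hprob : ∀ k, IsProb (μseq k) := by
    intro k
    induction k with
    | zero => exact hμ0
    | succ k ih => exact hstep k ▸ ih.add_smul_sub (ih.vecMul (hker _ ih)) hρ0.le hρ1
  refine ⟨fun k => ?_, by nlinarith, by nlinarith⟩
  calc tvNorm (μseq (k + 1) - μt)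
      ≤ (1 - ρ * (β - Lp / 2)) * tvNorm (μseq k - μt) := by
        rw [hstep]
        exact tvNorm_add_smul_vecMul_sub_sub_le (hprob k) hμt (hker _ (hprob k)) (hker _ hμt).2
          (funext hfix) hν.2 hDoe (hlip _ _ (hprob k) hμt) hρ0.le hρ1
    _ ≤ (1 - ρ * (2 * β - 1 - Lp)) * tvNorm (μseq k - μt) :=
        mul_le_mul_of_nonneg_right (by nlinarith) (tvNorm_nonneg _)

/-- Convergence of the distribution iteration `μ_{k+1} = μ_k + ρ^μ (μ_k P^{Q,μ_k} − μ_k)`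
towards the equilibrium `μ̃ = μ̃ P^{Q,μ̃}` with rate `Λ_μ = 1 − ρ^μ(2β − 1 − L_p) ∈ (0,1)`. -/
theorem mu_iteration_contraction {𝒳 𝒜 : Type*} [Fintype 𝒳] [Fintype 𝒜]
    (Q : 𝒳 → 𝒜 → ℝ)
    (P : (𝒳 → ℝ) → 𝒳 → 𝒳 → ℝ)
    (Lp : ℝ) (hLp : 0 < Lp ∧ Lp < 1)
    (hker : ∀ μ, IsProb μ → IsKernel (P μ))
    (hlip : ∀ μ₁ μ₂, IsProb μ₁ → IsProb μ₂ → ∀ x,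
      ∑ x', |P μ₁ x x' - P μ₂ x x'| ≤ Lp * tvNorm (fun y => μ₁ y - μ₂ y))
    (μt : 𝒳 → ℝ) (hμt : IsProb μt)
    (hfix : ∀ x', (∑ x, μt x * P μt x x') = μt x')
    (ν : 𝒳 → ℝ) (hν : IsProb ν)
    (β : ℝ) (hβ : (1 + Lp) / 2 < β ∧ β < 1)
    (hDoe : ∀ x x', β * ν x' ≤ P μt x x')
    (ρ : ℝ) (hρ : 0 < ρ ∧ ρ ≤ 1)
    (μseq : ℕ → 𝒳 → ℝ) (hμ0 : IsProb (μseq 0))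
    (hrec : ∀ k x', μseq (k + 1) x' =
      μseq k x' + ρ * ((∑ x, μseq k x * P (μseq k) x x') - μseq k x')) :
    (∀ k, tvNorm (fun x => μseq (k + 1) x - μt x) ≤
        (1 - ρ * (2 * β - 1 - Lp)) * tvNorm (fun x => μseq k x - μt x)) ∧
      (1 - ρ * (2 * β - 1 - Lp)) ∈ Set.Ioo (0 : ℝ) 1 :=
  mu_iteration_contraction_general P Lp hLp hker hlip μt hμt hfix ν hν β hβ hDoe ρ hρ μseq hμ0 hrec
end

section
/- Let 𝒳, 𝒜 be finite sets, h, γ > 0, and f(x,a,μ) a cost function with |f(x,a,μ)| ≤ F for all (x,a,μ) and |f(x,a,μ₁) − f(x,a,μ₂)| ≤ L_f ‖μ₁−μ₂‖_TV. Let p(x'|x,a,μ) be transition probabilities (p(·|x,a,μ) is a probability distribution on 𝒳) with Σ_{x'} |p(x'|x,a,μ₁) − p(x'|x,a,μ₂)| ≤ L_p ‖μ₁−μ₂‖_TV for all x,a. Suppose (Q*, μ̃*) satisfies the Bellman equation Q*(x,a) = h f(x,a,μ̃*) + e^{−γh} Σ_{x'} p(x'|x,a,μ̃*) min_{a'} Q*(x',a')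 for all (x,a). Let 0 < ρ^Q ≤ 1, let μ_k be probability distributions on 𝒳, and let Q_{k+1}(x,a) = Q_k(x,a) + ρ^Q ( h f(x,a,μ_k) + e^{−γh} Σ_{x'} p(x'|x,a,μ_k) min_{a'} Q_k(x',a') − Q_k(x,a) ), where ‖Q_k‖_∞ ≤ hF/(1 − e^{−γh}). Then ‖Q_{k+1} − Q*‖_∞ ≤ (1 − ρ^Q(1 − e^{−γh})) ‖Q_k − Q*‖_∞ + ρ^Q h ( L_f + L_p F/(e^{γh} − 1) ) ‖μ_k − μ̃*‖_TV. -/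
open Finset

/-- Sup norm `‖Q‖_∞ = max_{(x,a)} |Q(x,a)|` for `Q : 𝒳 × 𝒜 → ℝ`. -/
noncomputable def supNorm {𝒳 𝒜 : Type*} [Fintype 𝒳] [Fintype 𝒜] (Q : 𝒳 → 𝒜 → ℝ) : ℝ :=
  ⨆ q : 𝒳 × 𝒜, |Q q.1 q.2|

/-!
Write `T_μ` for the Bellman operator with cost `h f(·,·,μ)`, transitions `p(·|·,·,μ)` and
discount `β = e^{-γh}`. The iterate is the convex combination `Q_{k+1} = (1-ρ) Q_k + ρ T_{μ_k} Q_k`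
and `Q* = T_{μ*} Q*`, so `|Q_{k+1} - Q*| ≤ (1-ρ) ‖Q_k - Q*‖ + ρ |T_{μ_k} Q_k - T_{μ*} Q*|`.
Since `min` is 1-Lipschitz for the sup norm and `p` is stochastic,
`|T_{μ_k} Q_k - T_{μ*} Q*| ≤ h L_f ‖μ_k - μ*‖ + β (‖Q_k - Q*‖ + L_p ‖μ_k - μ*‖ ‖Q*‖)`,
and the fixed-point equation gives `(1-β) ‖Q*‖ ≤ h F`, i.e. `β ‖Q*‖ ≤ h F / (e^{γh} - 1)`.
-/

section SupNorm

variable {𝒳 𝒜 : Type*} [Fintype 𝒳] [Fintype 𝒜]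

lemma abs_le_supNorm (Q : 𝒳 → 𝒜 → ℝ) (x : 𝒳) (a : 𝒜) : |Q x a| ≤ supNorm Q :=
  le_ciSup (f := fun q : 𝒳 × 𝒜 => |Q q.1 q.2|) (Finite.bddAbove_range _) (x, a)

lemma supNorm_nonneg (Q : 𝒳 → 𝒜 → ℝ) : 0 ≤ supNorm Q :=
  Real.iSup_nonneg fun _ => abs_nonneg _

lemma supNorm_le [Nonempty 𝒳] [Nonempty 𝒜] {Q : 𝒳 → 𝒜 → ℝ} {c : ℝ}
    (hc : ∀ x a, |Q x a| ≤ c) : supNorm Q ≤ c :=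
  ciSup_le fun q => hc q.1 q.2

lemma abs_iInf_le_supNorm [Nonempty 𝒜] (Q : 𝒳 → 𝒜 → ℝ) (x : 𝒳) :
    |⨅ a, Q x a| ≤ supNorm Q := by
  obtain ⟨a, ha⟩ := exists_eq_ciInf_of_finite (f := Q x)
  exact ha ▸ abs_le_supNorm Q x a

end SupNorm

lemma abs_iInf_sub_iInf_le {ι : Type*} [Finite ι] [Nonempty ι] {g g' : ι → ℝ} {c : ℝ}
    (hc : ∀ i, |g i - g' i| ≤ c) : |(⨅ i, g i) - ⨅ i, g' i| ≤ c := by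
  have key : ∀ u v : ι → ℝ, (∀ i, |u i - v i| ≤ c) → (⨅ i, u i) ≤ (⨅ i, v i) + c := by
    intro u v huv
    obtain ⟨i, hi⟩ := exists_eq_ciInf_of_finite (f := v)
    calc (⨅ i, u i) ≤ u i := ciInf_le (Finite.bddBelow_range u) i
      _ ≤ v i + c := by linarith [(abs_le.mp (huv i)).2]
      _ = (⨅ i, v i) + c := by rw [hi]
  rw [abs_sub_le_iff]
  constructor
  · linarith [key g g' hc]
  · linarith [key g' g fun i => abs_sub_comm (g i) (g' i) ▸ hc i]

lemma abs_sum_mul_le {𝒳 : Type*} [Fintype 𝒳] {m g : 𝒳 → ℝ} {c : ℝ} (hg : ∀ x, |g x| ≤ c) :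
    |∑ x, m x * g x| ≤ (∑ x, |m x|) * c :=
  calc |∑ x, m x * g x| ≤ ∑ x, |m x * g x| := abs_sum_le_sum_abs _ _
    _ ≤ ∑ x, |m x| * c := by
        gcongr with x
        rw [abs_mul]
        exact mul_le_mul_of_nonneg_left (hg x) (abs_nonneg _)
    _ = (∑ x, |m x|) * c := (sum_mul ..).symm

lemma IsProb.abs_sum_mul_le {𝒳 : Type*} [Fintype 𝒳] {w g : 𝒳 → ℝ} {c : ℝ} (hw : IsProb w)
    (hg : ∀ x, |g x| ≤ c) : |∑ x, w x * g x| ≤ c := by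
  have hsum : ∑ x, |w x| = 1 := by
    rw [← hw.2]
    exact sum_congr rfl fun x _ => abs_of_nonneg (hw.1 x)
  simpa [hsum] using _root_.abs_sum_mul_le (m := w) hg

lemma abs_add_mul_sub_sub_le {q t s ρ : ℝ} (hρ0 : 0 ≤ ρ) (hρ1 : ρ ≤ 1) :
    |q + ρ * (t - q) - s| ≤ (1 - ρ) * |q - s| + ρ * |t - s| := by
  calc |q + ρ * (t - q) - s| = |(1 - ρ) * (q - s) + ρ * (t - s)| := by
        congr 1; ring
    _ ≤ |(1 - ρ) * (q - s)| + |ρ * (t - s)| := abs_add_le _ _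
    _ = (1 - ρ) * |q - s| + ρ * |t - s| := by
        rw [abs_mul, abs_mul, abs_of_nonneg (sub_nonneg.mpr hρ1), abs_of_nonneg hρ0]

lemma exp_neg_mul_le_div_exp_sub_one {r C S : ℝ} (hr : 0 < r)
    (hS : S ≤ C + Real.exp (-r) * S) : Real.exp (-r) * S ≤ C / (Real.exp r - 1) := by
  have hE : 1 < Real.exp r := Real.one_lt_exp_iff.mpr hr
  have hβE : Real.exp (-r) * (Real.exp r - 1) = 1 - Real.exp (-r) := by
    rw [mul_sub, ← Real.exp_add, neg_add_cancel, Real.exp_zero, mul_one]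
  rw [le_div_iff₀ (sub_pos.mpr hE), mul_right_comm, hβE]
  linear_combination hS

section BellmanOp

variable {𝒳 𝒜 : Type*} [Fintype 𝒳] [Fintype 𝒜]

/-- `c x a` is the stage cost `h f(x,a,μ)`, `P x a` the law `p(·|x,a,μ)` of the next state and
`β = e^{-γh}` the discount factor. -/
noncomputable def bellmanOp (β : ℝ) (c : 𝒳 → 𝒜 → ℝ) (P : 𝒳 → 𝒜 → 𝒳 → ℝ)
    (Q : 𝒳 → 𝒜 → ℝ) : 𝒳 → 𝒜 → ℝ :=
  fun x a => c x a + β * ∑ x', P x a x' * ⨅ a', Q x' a'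

lemma abs_bellmanOp_sub_bellmanOp_le [Nonempty 𝒜] {β : ℝ} (hβ : 0 ≤ β) {c₁ c₂ : 𝒳 → 𝒜 → ℝ}
    {P₁ P₂ : 𝒳 → 𝒜 → 𝒳 → ℝ} (hP₁ : ∀ x a, IsProb (P₁ x a)) (Q₁ Q₂ : 𝒳 → 𝒜 → ℝ)
    (x : 𝒳) (a : 𝒜) :
    |bellmanOp β c₁ P₁ Q₁ x a - bellmanOp β c₂ P₂ Q₂ x a| ≤
      |c₁ x a - c₂ x a| + β * (supNorm (fun x a => Q₁ x a - Q₂ x a) +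
        (∑ x', |P₁ x a x' - P₂ x a x'|) * supNorm Q₂) := by
  have hsplit : bellmanOp β c₁ P₁ Q₁ x a - bellmanOp β c₂ P₂ Q₂ x a =
      (c₁ x a - c₂ x a) + β * (∑ x', P₁ x a x' * ((⨅ a', Q₁ x' a') - ⨅ a', Q₂ x' a') +
        ∑ x', (P₁ x a x' - P₂ x a x') * ⨅ a', Q₂ x' a') := by
    have hsum : ∑ x', P₁ x a x' * (⨅ a', Q₁ x' a') - ∑ x', P₂ x a x' * (⨅ a', Q₂ x' a') =
        ∑ x', P₁ x a x' * ((⨅ a', Q₁ x' a') - ⨅ a', Q₂ x' a') +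
          ∑ x', (P₁ x a x' - P₂ x a x') * ⨅ a', Q₂ x' a' := by
      rw [← sum_add_distrib, ← sum_sub_distrib]
      exact sum_congr rfl fun x' _ => by ring
    simp only [bellmanOp]
    linear_combination β * hsum
  have hmin : ∀ x', |(⨅ a', Q₁ x' a') - ⨅ a', Q₂ x' a'| ≤ supNorm fun x a => Q₁ x a - Q₂ x a :=
    fun x' => abs_iInf_sub_iInf_le fun a' => abs_le_supNorm (fun x a => Q₁ x a - Q₂ x a) x' a'
  rw [hsplit]
  refine (abs_add_le _ _).trans (add_le_add le_rfl ?_)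
  rw [abs_mul, abs_of_nonneg hβ]
  gcongr
  exact (abs_add_le _ _).trans (add_le_add ((hP₁ x a).abs_sum_mul_le hmin)
    (abs_sum_mul_le (abs_iInf_le_supNorm Q₂)))

lemma supNorm_le_of_bellmanOp_eq [Nonempty 𝒳] [Nonempty 𝒜] {β C : ℝ} (hβ : 0 ≤ β) {c : 𝒳 → 𝒜 → ℝ}
    (hc : ∀ x a, |c x a| ≤ C) {P : 𝒳 → 𝒜 → 𝒳 → ℝ} (hP : ∀ x a, IsProb (P x a))
    {Q : 𝒳 → 𝒜 → ℝ} (hQ : bellmanOp β c P Q = Q) : supNorm Q ≤ C + β * supNorm Q := by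
  refine supNorm_le fun x a => ?_
  conv_lhs => rw [← hQ]
  calc |bellmanOp β c P Q x a| ≤ |c x a| + |β * ∑ x', P x a x' * ⨅ a', Q x' a'| :=
        abs_add_le _ _
    _ ≤ C + β * supNorm Q := by
        rw [abs_mul, abs_of_nonneg hβ]
        gcongr
        · exact hc x a
        · exact (hP x a).abs_sum_mul_le (abs_iInf_le_supNorm Q)

lemma supNorm_relax_sub_le [Nonempty 𝒳] [Nonempty 𝒜] {β ρ δc δP : ℝ} (hβ : 0 ≤ β)
    (hρ0 : 0 ≤ ρ) (hρ1 : ρ ≤ 1) {c₁ c₂ : 𝒳 → 𝒜 → ℝ} (hc : ∀ x a, |c₁ x a - c₂ x a| ≤ δc)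
    {P₁ P₂ : 𝒳 → 𝒜 → 𝒳 → ℝ} (hP₁ : ∀ x a, IsProb (P₁ x a))
    (hP : ∀ x a, ∑ x', |P₁ x a x' - P₂ x a x'| ≤ δP) {Q Q' Qstar : 𝒳 → 𝒜 → ℝ}
    (hQ' : ∀ x a, Q' x a = Q x a + ρ * (bellmanOp β c₁ P₁ Q x a - Q x a))
    (hQstar : bellmanOp β c₂ P₂ Qstar = Qstar) :
    supNorm (fun x a => Q' x a - Qstar x a) ≤
      (1 - ρ * (1 - β)) * supNorm (fun x a => Q x a - Qstar x a) +
        ρ * (δc + β * δP * supNorm Qstar) := by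
  set Δ := supNorm (fun x a => Q x a - Qstar x a)
  refine supNorm_le fun x a => ?_
  have hT := abs_bellmanOp_sub_bellmanOp_le hβ hP₁ Q Qstar x a (c₁ := c₁) (c₂ := c₂) (P₂ := P₂)
  rw [hQstar] at hT
  calc |Q' x a - Qstar x a|
      ≤ (1 - ρ) * Δ + ρ * (δc + β * (Δ + δP * supNorm Qstar)) := by
        rw [hQ' x a]
        refine (abs_add_mul_sub_sub_le hρ0 hρ1).trans ?_
        gcongr
        · exact abs_le_supNorm (fun x a => Q x a - Qstar x a) x a
        · refine hT.trans ?_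
          gcongr
          · exact hc x a
          · exact supNorm_nonneg _
          · exact hP x a
    _ = (1 - ρ * (1 - β)) * Δ + ρ * (δc + β * δP * supNorm Qstar) := by ring

end BellmanOp

theorem Q_iteration_contraction_general {𝒳 𝒜 : Type*} [Fintype 𝒳] [Fintype 𝒜]
    [Nonempty 𝒳] [Nonempty 𝒜]
    (h γ F Lf Lp ρQ : ℝ) (hh : 0 < h) (hγ : 0 < γ)
    (f : 𝒳 → 𝒜 → (𝒳 → ℝ) → ℝ)
    (hfb : ∀ x a μ, |f x a μ| ≤ F)
    (hflip : ∀ x a μ₁ μ₂, |f x a μ₁ - f x a μ₂| ≤ Lf * tvNorm (fun y => μ₁ y - μ₂ y))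
    (p : 𝒳 → 𝒳 → 𝒜 → (𝒳 → ℝ) → ℝ)
    (hp : ∀ x a μ, IsProb (fun x' => p x' x a μ))
    (hplip : ∀ x a μ₁ μ₂,
      ∑ x', |p x' x a μ₁ - p x' x a μ₂| ≤ Lp * tvNorm (fun y => μ₁ y - μ₂ y))
    (Qstar : 𝒳 → 𝒜 → ℝ) (μstar : 𝒳 → ℝ)
    (hbell : ∀ x a, Qstar x a = h * f x a μstar +
      Real.exp (-γ * h) * ∑ x', p x' x a μstar * (⨅ a', Qstar x' a'))
    (hρ : 0 < ρQ ∧ ρQ ≤ 1)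
    (μk : 𝒳 → ℝ)
    (Qk Qk1 : 𝒳 → 𝒜 → ℝ)
    (hup : ∀ x a, Qk1 x a = Qk x a + ρQ * (h * f x a μk +
      Real.exp (-γ * h) * (∑ x', p x' x a μk * (⨅ a', Qk x' a')) - Qk x a)) :
    supNorm (fun x a => Qk1 x a - Qstar x a) ≤
      (1 - ρQ * (1 - Real.exp (-γ * h))) * supNorm (fun x a => Qk x a - Qstar x a) +
        ρQ * h * (Lf + Lp * F / (Real.exp (γ * h) - 1)) *
          tvNorm (fun y => μk y - μstar y) := by
  obtain ⟨hρ0, hρ1⟩ := hρ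
  have hbell' : bellmanOp (Real.exp (-γ * h)) (fun x a => h * f x a μstar)
      (fun x a x' => p x' x a μstar) Qstar = Qstar := funext₂ fun x a => (hbell x a).symm
  have hcost : ∀ x a, |h * f x a μstar| ≤ h * F := fun x a => by
    rw [abs_mul, abs_of_pos hh]
    exact mul_le_mul_of_nonneg_left (hfb x a μstar) hh.le
  have hcost_lip : ∀ x a, |h * f x a μk - h * f x a μstar| ≤
      h * (Lf * tvNorm (fun y => μk y - μstar y)) := fun x a => by
    rw [← mul_sub, abs_mul, abs_of_pos hh]
    exact mul_le_mul_of_nonneg_left (hflip x a μk μstar) hh.le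
  have hQstar : Real.exp (-γ * h) * supNorm Qstar ≤ h * F / (Real.exp (γ * h) - 1) := by
    rw [neg_mul] at hbell' ⊢
    exact exp_neg_mul_le_div_exp_sub_one (mul_pos hγ hh) (supNorm_le_of_bellmanOp_eq
      (Real.exp_pos _).le hcost (fun x a => hp x a μstar) hbell')
  have hLpt : 0 ≤ Lp * tvNorm (fun y => μk y - μstar y) :=
    (sum_nonneg fun _ _ => abs_nonneg _).trans
      (hplip (Classical.arbitrary 𝒳) (Classical.arbitrary 𝒜) μk μstar)
  have hstep := supNorm_relax_sub_le (Real.exp_pos _).le hρ0.le hρ1 hcost_lip (fun x a => hp x a μk)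
    (fun x a => hplip x a μk μstar) hup hbell'
  linear_combination hstep + mul_le_mul_of_nonneg_left hQstar (mul_nonneg hρ0.le hLpt)

/-- One-step contraction estimate for the Q-iteration towards a Bellman fixed point. -/
theorem Q_iteration_contraction {𝒳 𝒜 : Type*} [Fintype 𝒳] [Fintype 𝒜]
    [Nonempty 𝒳] [Nonempty 𝒜]
    (h γ F Lf Lp ρQ : ℝ) (hh : 0 < h) (hγ : 0 < γ)
    (f : 𝒳 → 𝒜 → (𝒳 → ℝ) → ℝ)
    (hfb : ∀ x a μ, |f x a μ| ≤ F)
    (hflip : ∀ x a μ₁ μ₂, |f x a μ₁ - f x a μ₂| ≤ Lf * tvNorm (fun y => μ₁ y - μ₂ y))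
    (p : 𝒳 → 𝒳 → 𝒜 → (𝒳 → ℝ) → ℝ)
    (hp : ∀ x a μ, IsProb (fun x' => p x' x a μ))
    (hplip : ∀ x a μ₁ μ₂,
      ∑ x', |p x' x a μ₁ - p x' x a μ₂| ≤ Lp * tvNorm (fun y => μ₁ y - μ₂ y))
    (Qstar : 𝒳 → 𝒜 → ℝ) (μstar : 𝒳 → ℝ) (hμstar : IsProb μstar)
    (hbell : ∀ x a, Qstar x a = h * f x a μstar +
      Real.exp (-γ * h) * ∑ x', p x' x a μstar * (⨅ a', Qstar x' a'))
    (hρ : 0 < ρQ ∧ ρQ ≤ 1)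
    (μk : 𝒳 → ℝ) (hμk : IsProb μk)
    (Qk Qk1 : 𝒳 → 𝒜 → ℝ)
    (hQkb : supNorm Qk ≤ h * F / (1 - Real.exp (-γ * h)))
    (hup : ∀ x a, Qk1 x a = Qk x a + ρQ * (h * f x a μk +
      Real.exp (-γ * h) * (∑ x', p x' x a μk * (⨅ a', Qk x' a')) - Qk x a)) :
    supNorm (fun x a => Qk1 x a - Qstar x a) ≤
      (1 - ρQ * (1 - Real.exp (-γ * h))) * supNorm (fun x a => Qk x a - Qstar x a) +
        ρQ * h * (Lf + Lp * F / (Real.exp (γ * h) - 1)) *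
          tvNorm (fun y => μk y - μstar y) :=
  Q_iteration_contraction_general h γ F Lf Lp ρQ hh hγ f hfb hflip p hp hplip Qstar μstar hbell hρ
    μk Qk Qk1 hup
end

section
/- Fix Q : 𝒳 × 𝒜 → ℝ and let {P^{Q,μ}} be a family of row-stochastic kernels on a finite set 𝒳 indexed by probability distributions μ, satisfying Σ_{x'} |P^{Q,μ₁}(x,x') − P^{Q,μ₂}(x,x')| ≤ L_p ‖μ₁−μ₂‖_TV for all x with 0 < L_p < 1, and the uniform Doeblin condition P^{Q,μ}(x,x') ≥ β ν(x') for all x, x', μ, with ν a probability distribution and β ∈ ((1+L_p)/2, 1). Then there exists exactly one probability distribution μ on 𝒳 satisfying μ = μ P^{Q,μ}. -/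
open Finset

lemma tvNorm_le_half_sum {𝒳 : Type*} [Fintype 𝒳] (m : 𝒳 → ℝ)
    (hm : ∑ x, m x = 0) : tvNorm m ≤ (∑ x, |m x|) / 2 := by
  classical
  apply ciSup_le
  intro A
  have hc := Finset.sum_add_sum_compl A m
  have h1 : |∑ x ∈ A, m x| ≤ ∑ x ∈ A, |m x| := Finset.abs_sum_le_sum_abs _ _
  have h2 : ∑ x ∈ A, m x = -∑ x ∈ Aᶜ, m x := by rw [hm] at hc; linarith
  have h3 : |∑ x ∈ A, m x| ≤ ∑ x ∈ Aᶜ, |m x| := by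
    rw [h2, abs_neg]; exact Finset.abs_sum_le_sum_abs _ _
  have h4 : ∑ x ∈ A, |m x| + ∑ x ∈ Aᶜ, |m x| = ∑ x, |m x| :=
    Finset.sum_add_sum_compl A _
  linarith

/-- Existence and uniqueness of the equilibrium distribution `μ = μ P^{Q,μ}`
for a fixed `Q`, under the Lipschitz and uniform Doeblin conditions. -/
theorem equilibrium_exists_unique {𝒳 𝒜 : Type*} [Fintype 𝒳] [Fintype 𝒜]
    (Q : 𝒳 → 𝒜 → ℝ)
    (P : (𝒳 → ℝ) → 𝒳 → 𝒳 → ℝ)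
    (Lp : ℝ) (hLp : 0 < Lp ∧ Lp < 1)
    (hker : ∀ μ, IsProb μ → IsKernel (P μ))
    (hlip : ∀ μ₁ μ₂, IsProb μ₁ → IsProb μ₂ → ∀ x,
      ∑ x', |P μ₁ x x' - P μ₂ x x'| ≤ Lp * tvNorm (fun y => μ₁ y - μ₂ y))
    (ν : 𝒳 → ℝ) (hν : IsProb ν)
    (β : ℝ) (hβ : (1 + Lp) / 2 < β ∧ β < 1)
    (hDoe : ∀ μ, IsProb μ → ∀ x x', β * ν x' ≤ P μ x x') :
    ∃! μ : 𝒳 → ℝ, IsProb μ ∧ ∀ x', (∑ x, μ x * P μ x x') = μ x' := by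
  classical
  obtain ⟨hLp0, hLp1⟩ := hLp
  obtain ⟨hβ1, hβ2⟩ := hβ
  set K : ℝ := 1 - β + Lp / 2 with hKdef
  have hK0 : 0 ≤ K := by rw [hKdef]; linarith
  have hK1 : K < 1 := by rw [hKdef]; linarith
  -- key contraction estimate
  have key : ∀ μ₁ μ₂ : 𝒳 → ℝ, IsProb μ₁ → IsProb μ₂ →
      ∑ x', |(∑ x, μ₁ x * P μ₁ x x') - (∑ x, μ₂ x * P μ₂ x x')| ≤
        K * ∑ x, |μ₁ x - μ₂ x| := by
    intro μ₁ μ₂ h₁ h₂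
    set d : ℝ := ∑ x, |μ₁ x - μ₂ x| with hd
    have hsum0 : ∑ x, (μ₁ x - μ₂ x) = 0 := by
      rw [Finset.sum_sub_distrib, h₁.2, h₂.2]; ring
    have t1 : ∑ x', |∑ x, (μ₁ x - μ₂ x) * P μ₁ x x'| ≤ (1 - β) * d := by
      have hR : ∀ x x', 0 ≤ P μ₁ x x' - β * ν x' := fun x x' => by
        linarith [hDoe μ₁ h₁ x x']
      have hRsum : ∀ x, ∑ x', (P μ₁ x x' - β * ν x') = 1 - β := by
        intro x
        rw [Finset.sum_sub_distrib, (hker μ₁ h₁).2 x, ← Finset.mul_sum, hν.2]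
        ring
      have hrw : ∀ x', ∑ x, (μ₁ x - μ₂ x) * P μ₁ x x'
          = ∑ x, (μ₁ x - μ₂ x) * (P μ₁ x x' - β * ν x') := by
        intro x'
        rw [← sub_eq_zero, ← Finset.sum_sub_distrib]
        have he : ∀ x ∈ univ, (μ₁ x - μ₂ x) * P μ₁ x x'
            - (μ₁ x - μ₂ x) * (P μ₁ x x' - β * ν x')
            = (μ₁ x - μ₂ x) * (β * ν x') := fun x _ => by ring
        rw [Finset.sum_congr rfl he, ← Finset.sum_mul, hsum0, zero_mul]
      calc ∑ x', |∑ x, (μ₁ x - μ₂ x) * P μ₁ x x'|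
          ≤ ∑ x', ∑ x, |μ₁ x - μ₂ x| * (P μ₁ x x' - β * ν x') := by
            apply Finset.sum_le_sum; intro x' _
            rw [hrw x']
            refine (Finset.abs_sum_le_sum_abs _ _).trans ?_
            apply Finset.sum_le_sum; intro x _
            rw [abs_mul, abs_of_nonneg (hR x x')]
        _ = ∑ x, |μ₁ x - μ₂ x| * (1 - β) := by
            rw [Finset.sum_comm]
            exact Finset.sum_congr rfl fun x _ => by rw [← Finset.mul_sum, hRsum x]
        _ = (1 - β) * d := by rw [← Finset.sum_mul, mul_comm]
    have htv : tvNorm (fun y => μ₁ y - μ₂ y) ≤ d / 2 := tvNorm_le_half_sum _ hsum0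
    have t2 : ∑ x', |∑ x, μ₂ x * (P μ₁ x x' - P μ₂ x x')| ≤ Lp * (d / 2) := by
      calc ∑ x', |∑ x, μ₂ x * (P μ₁ x x' - P μ₂ x x')|
          ≤ ∑ x', ∑ x, μ₂ x * |P μ₁ x x' - P μ₂ x x'| := by
            apply Finset.sum_le_sum; intro x' _
            refine (Finset.abs_sum_le_sum_abs _ _).trans ?_
            apply Finset.sum_le_sum; intro x _
            rw [abs_mul, abs_of_nonneg (h₂.1 x)]
        _ = ∑ x, μ₂ x * ∑ x', |P μ₁ x x' - P μ₂ x x'| := by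
            rw [Finset.sum_comm]
            exact Finset.sum_congr rfl fun x _ => (Finset.mul_sum _ _ _).symm
        _ ≤ ∑ x, μ₂ x * (Lp * (d / 2)) := by
            apply Finset.sum_le_sum; intro x _
            refine mul_le_mul_of_nonneg_left ?_ (h₂.1 x)
            exact (hlip μ₁ μ₂ h₁ h₂ x).trans
              (mul_le_mul_of_nonneg_left htv hLp0.le)
        _ = Lp * (d / 2) := by rw [← Finset.sum_mul, h₂.2, one_mul]
    calc ∑ x', |(∑ x, μ₁ x * P μ₁ x x') - (∑ x, μ₂ x * P μ₂ x x')|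
        ≤ ∑ x', (|∑ x, (μ₁ x - μ₂ x) * P μ₁ x x'|
            + |∑ x, μ₂ x * (P μ₁ x x' - P μ₂ x x')|) := by
          apply Finset.sum_le_sum; intro x' _
          have hdecomp : (∑ x, μ₁ x * P μ₁ x x') - (∑ x, μ₂ x * P μ₂ x x')
              = (∑ x, (μ₁ x - μ₂ x) * P μ₁ x x')
                + ∑ x, μ₂ x * (P μ₁ x x' - P μ₂ x x') := by
            rw [← Finset.sum_add_distrib, ← Finset.sum_sub_distrib]
            exact Finset.sum_congr rfl fun x _ => by ring
          rw [hdecomp]; exact abs_add_le _ _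
      _ = (∑ x', |∑ x, (μ₁ x - μ₂ x) * P μ₁ x x'|)
          + ∑ x', |∑ x, μ₂ x * (P μ₁ x x' - P μ₂ x x')| := Finset.sum_add_distrib
      _ ≤ (1 - β) * d + Lp * (d / 2) := add_le_add t1 t2
      _ = K * d := by rw [hKdef]; ring
  -- T maps probabilities to probabilities
  have hprob : ∀ μ : 𝒳 → ℝ, IsProb μ → IsProb (fun x' => ∑ x, μ x * P μ x x') := by
    intro μ hμ
    refine ⟨fun x' => Finset.sum_nonneg fun x _ =>
      mul_nonneg (hμ.1 x) ((hker μ hμ).1 x x'), ?_⟩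
    rw [Finset.sum_comm]
    calc ∑ x, ∑ x', μ x * P μ x x' = ∑ x, μ x :=
          Finset.sum_congr rfl fun x _ => by
            rw [← Finset.mul_sum, (hker μ hμ).2 x, mul_one]
      _ = 1 := hμ.2
  -- Banach fixed point on the simplex in the L¹ space
  let E := PiLp 1 (fun _ : 𝒳 => ℝ)
  have hdist : ∀ a b : E, dist a b = ∑ x, |a x - b x| := by
    intro a b; rw [PiLp.dist_eq_sum (by norm_num)]; simp [Real.dist_eq]
  let S : Set E := {μ | IsProb μ}
  have hcont : ∀ x : 𝒳, Continuous (fun μ : E => μ x) :=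
    fun x => (continuous_apply x).comp (PiLp.continuous_ofLp 1 _)
  have hSclosed : IsClosed S := by
    have h1 : IsClosed {μ : E | ∀ x, 0 ≤ μ x} := by
      have h : {μ : E | ∀ x, 0 ≤ μ x} = ⋂ x, {μ : E | 0 ≤ μ x} := by
        ext; simp [Set.mem_iInter]
      rw [h]
      exact isClosed_iInter fun x => isClosed_le continuous_const (hcont x)
    have h2 : IsClosed {μ : E | ∑ x, μ x = 1} :=
      isClosed_eq (continuous_finset_sum _ fun x _ => hcont x) continuous_const
    have h : S = {μ : E | ∀ x, 0 ≤ μ x} ∩ {μ : E | ∑ x, μ x = 1} := rfl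
    rw [h]; exact h1.inter h2
  haveI : Nonempty S := ⟨⟨WithLp.toLp 1 ν, hν⟩⟩
  haveI : CompleteSpace S := hSclosed.completeSpace_coe
  let f : S → S := fun μ =>
    ⟨WithLp.toLp 1 (fun x' => ∑ x, μ.1 x * P μ.1 x x' : 𝒳 → ℝ), hprob μ.1 μ.2⟩
  have hKnn : ((Real.toNNReal K) : ℝ) = K := Real.coe_toNNReal K hK0
  have hcontr : ContractingWith (Real.toNNReal K) f := by
    constructor
    · rw [← NNReal.coe_lt_coe, hKnn, NNReal.coe_one]; exact hK1
    · apply LipschitzWith.of_dist_le_mul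
      intro μ₁ μ₂
      rw [Subtype.dist_eq, Subtype.dist_eq, hdist, hdist, hKnn]
      exact key μ₁.1 μ₂.1 μ₁.2 μ₂.2
  have hfix : f (ContractingWith.fixedPoint f hcontr)
      = ContractingWith.fixedPoint f hcontr := hcontr.fixedPoint_isFixedPt
  set μs : 𝒳 → ℝ := (ContractingWith.fixedPoint f hcontr).1.ofLp with hμs
  have hμsprob : IsProb μs := (ContractingWith.fixedPoint f hcontr).2
  have hμsfix : ∀ x', (∑ x, μs x * P μs x x') = μs x' := by
    intro x'
    exact congrFun (congrArg (fun μ : S => μ.1.ofLp) hfix) x'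
  refine ⟨μs, ⟨hμsprob, hμsfix⟩, ?_⟩
  rintro y ⟨hy, hyfix⟩
  have hk := key y μs hy hμsprob
  simp only [hyfix, hμsfix] at hk
  have hnn : ∀ x ∈ (univ : Finset 𝒳), 0 ≤ |y x - μs x| := fun x _ => abs_nonneg _
  have hdnn : 0 ≤ ∑ x, |y x - μs x| := Finset.sum_nonneg hnn
  have hzero : ∑ x, |y x - μs x| = 0 := by nlinarith
  funext x
  have h0 := (Finset.sum_eq_zero_iff_of_nonneg hnn).mp hzero x (mem_univ x)
  have := abs_eq_zero.mp h0
  linarith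
end

section
/- Let 𝒳, 𝒜 be finite sets, h, γ > 0. Let f(x,a,μ) be a cost function with 0 ≤ f(x,a,μ) ≤ F for all (x,a,μ) and |f(x,a,μ₁) − f(x,a,μ₂)| ≤ L_f ‖μ₁−μ₂‖_TV. Let p(x'|x,a,μ) be transition probabilities and define P^{Q,μ}(x,x') = p(x'|x, argmin_a Q(x,a), μ); assume Σ_{x'} |P^{Q₁,μ₁}(x,x') − P^{Q₂,μ₂}(x,x')| ≤ L_p ‖μ₁−μ₂‖_TV + L_Q ‖Q₁−Q₂‖_∞ for all x with 0 < L_p < 1, L_Q > 0, Σ_{x'} |p(x'|x,a,μ₁) − p(x'|x,a,μ₂)| ≤ L_p ‖μ₁−μ₂‖_TV for all x, a, and the uniform Doeblin condition P^{Q,μ}(x,x') ≥ β ν(x') for all x, x', Q, μ, with ν a probability distribution and β ∈ ((1+L_p)/2, 1). Then there exists a pair (Q*, μ*), with Q* : 𝒳 × 𝒜 → ℝ satisfying 0 ≤ Q*(x,a) ≤ hF/(1 − e^{−γh}) and μ* a probability distribution on 𝒳, such that Q*(x,a) = h f(x,a,μ*) + e^{−γh} Σ_{x'} p(x'|x,a,μ*)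 min_{a'} Q*(x',a') for all (x,a), and μ* = μ* P^{Q*,μ*}. -/
open Finset

lemma ciInf_sub_ciInf_le {𝒜 : Type*} [Fintype 𝒜] [Nonempty 𝒜] (g₁ g₂ : 𝒜 → ℝ) (c : ℝ)
    (hc : ∀ a, |g₁ a - g₂ a| ≤ c) : (⨅ a, g₁ a) - (⨅ a, g₂ a) ≤ c := by
  obtain ⟨a, ha⟩ := Finite.exists_min g₂
  have h2 : (⨅ a, g₂ a) = g₂ a :=
    le_antisymm (ciInf_le ((Set.finite_range g₂).bddBelow) a) (le_ciInf ha)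
  have h1 : (⨅ a, g₁ a) ≤ g₁ a := ciInf_le ((Set.finite_range g₁).bddBelow) a
  have := abs_le.1 (hc a)
  linarith

lemma abs_ciInf_sub_ciInf_le {𝒜 : Type*} [Fintype 𝒜] [Nonempty 𝒜] (g₁ g₂ : 𝒜 → ℝ) (c : ℝ)
    (hc : ∀ a, |g₁ a - g₂ a| ≤ c) : |(⨅ a, g₁ a) - (⨅ a, g₂ a)| ≤ c := by
  have h1 := ciInf_sub_ciInf_le g₁ g₂ c hc
  have h2 := ciInf_sub_ciInf_le g₂ g₁ c (fun a => by rw [abs_sub_comm]; exact hc a)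
  rw [abs_le]; constructor <;> linarith

/-- Existence of a fixed-point pair `(Q*, μ*)` of the coupled Bellman equation and
equilibrium equation `μ* = μ* P^{Q*,μ*}`, where
`P^{Q,μ}(x,x') = p(x'|x, argmin_a Q(x,a), μ)`. -/
theorem fixed_point_pair_exists {𝒳 𝒜 : Type*} [Fintype 𝒳] [Fintype 𝒜]
    [Nonempty 𝒳] [Nonempty 𝒜]
    (h γ F Lf Lp LQ β : ℝ) (hh : 0 < h) (hγ : 0 < γ)
    (hLp : 0 < Lp ∧ Lp < 1) (hLQ : 0 < LQ)
    (hβ : (1 + Lp) / 2 < β ∧ β < 1)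
    (f : 𝒳 → 𝒜 → (𝒳 → ℝ) → ℝ)
    (hfb : ∀ x a μ, 0 ≤ f x a μ ∧ f x a μ ≤ F)
    (hflip : ∀ x a μ₁ μ₂, |f x a μ₁ - f x a μ₂| ≤ Lf * tvNorm (fun y => μ₁ y - μ₂ y))
    (p : 𝒳 → 𝒳 → 𝒜 → (𝒳 → ℝ) → ℝ)
    (hp : ∀ x a μ, IsProb (fun x' => p x' x a μ))
    -- a fixed choice of minimizer `argmin_a Q(x,a)`
    (amin : (𝒳 → 𝒜 → ℝ) → 𝒳 → 𝒜)
    (hamin : ∀ (Q : 𝒳 → 𝒜 → ℝ) (x : 𝒳) (a : 𝒜), Q x (amin Q x) ≤ Q x a)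
    -- Lipschitz bound for the induced kernels `P^{Q,μ}(x,x') = p(x'|x, amin Q x, μ)`
    (hPlip : ∀ (Q₁ Q₂ : 𝒳 → 𝒜 → ℝ) μ₁ μ₂, IsProb μ₁ → IsProb μ₂ → ∀ x,
      ∑ x', |p x' x (amin Q₁ x) μ₁ - p x' x (amin Q₂ x) μ₂| ≤
        Lp * tvNorm (fun y => μ₁ y - μ₂ y) + LQ * supNorm (fun x a => Q₁ x a - Q₂ x a))
    (hplip : ∀ x a μ₁ μ₂, IsProb μ₁ → IsProb μ₂ →
      ∑ x', |p x' x a μ₁ - p x' x a μ₂| ≤ Lp * tvNorm (fun y => μ₁ y - μ₂ y))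
    -- uniform Doeblin condition for the induced kernels
    (ν : 𝒳 → ℝ) (hν : IsProb ν)
    (hDoe : ∀ (Q : 𝒳 → 𝒜 → ℝ) μ, IsProb μ → ∀ x x', β * ν x' ≤ p x' x (amin Q x) μ) :
    ∃ (Qstar : 𝒳 → 𝒜 → ℝ) (μstar : 𝒳 → ℝ),
      (∀ x a, 0 ≤ Qstar x a ∧ Qstar x a ≤ h * F / (1 - Real.exp (-γ * h))) ∧
      IsProb μstar ∧
      (∀ x a, Qstar x a = h * f x a μstar +
        Real.exp (-γ * h) * ∑ x', p x' x a μstar * (⨅ a', Qstar x' a')) ∧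
      (∀ x', (∑ x, μstar x * p x' x (amin Qstar x) μstar) = μstar x') := by
  classical
  -- basic constants
  set α := Real.exp (-γ * h) with hαdef
  have hα0 : 0 < α := Real.exp_pos _
  have hα1 : α < 1 := by
    rw [hαdef, Real.exp_lt_one_iff]; nlinarith
  have hF0 : 0 ≤ F := by
    obtain ⟨x⟩ := (inferInstance : Nonempty 𝒳)
    obtain ⟨a⟩ := (inferInstance : Nonempty 𝒜)
    have := hfb x a ν; linarith [this.1, this.2]
  set M := h * F / (1 - α) with hMdef
  have hM0 : 0 ≤ M := by
    apply div_nonneg (by positivity); linarith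
  have hMeq : h * F + α * M = M := by
    have h1 : (1:ℝ) - α ≠ 0 := by linarith
    rw [hMdef]; field_simp; ring
  -- Step 1: `p` does not depend on the action
  have pind : ∀ (x : 𝒳) (a₁ a₂ : 𝒜) (μ : 𝒳 → ℝ), IsProb μ → ∀ x',
      p x' x a₁ μ = p x' x a₂ μ := by
    intro x a₁ a₂ μ hμ x'
    rcases eq_or_ne a₁ a₂ with rfl | hne
    · rfl
    have key : ∀ ε : ℝ, 0 < ε → |p x' x a₁ μ - p x' x a₂ μ| ≤ LQ * ε := by
      intro ε hε
      set Q₁ : 𝒳 → 𝒜 → ℝ := fun _ a => if a = a₁ then -ε else 0 with hQ₁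
      set Q₂ : 𝒳 → 𝒜 → ℝ := fun _ a => if a = a₂ then -ε else 0 with hQ₂
      have hm₁ : amin Q₁ x = a₁ := by
        by_contra hc
        have := hamin Q₁ x a₁
        rw [show Q₁ x (amin Q₁ x) = 0 from if_neg hc, show Q₁ x a₁ = -ε from if_pos rfl] at this
        linarith
      have hm₂ : amin Q₂ x = a₂ := by
        by_contra hc
        have := hamin Q₂ x a₂
        rw [show Q₂ x (amin Q₂ x) = 0 from if_neg hc, show Q₂ x a₂ = -ε from if_pos rfl] at this
        linarith
      have htv : tvNorm (fun y => μ y - μ y) = 0 := by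
        simp [tvNorm, ciSup_const]
      have hsup : supNorm (fun y a => Q₁ y a - Q₂ y a) ≤ ε := by
        apply ciSup_le
        rintro ⟨y, a⟩
        simp only [hQ₁, hQ₂]
        rcases eq_or_ne a a₁ with rfl | h1
        · rw [if_pos rfl, if_neg hne]
          rw [abs_of_nonpos (by linarith)]; linarith
        · rw [if_neg h1]
          rcases eq_or_ne a a₂ with rfl | h2
          · rw [if_pos rfl]
            rw [abs_of_nonneg (by linarith)]; linarith
          · rw [if_neg h2]; simp [abs_of_nonneg, hε.le]
      have hsum := hPlip Q₁ Q₂ μ μ hμ hμ x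
      rw [hm₁, hm₂, htv, mul_zero, zero_add] at hsum
      have h1 : |p x' x a₁ μ - p x' x a₂ μ| ≤
          ∑ x'', |p x'' x a₁ μ - p x'' x a₂ μ| :=
        Finset.single_le_sum (f := fun x'' => |p x'' x a₁ μ - p x'' x a₂ μ|)
          (fun i _ => abs_nonneg _) (mem_univ x')
      have h2 : LQ * supNorm (fun y a => Q₁ y a - Q₂ y a) ≤ LQ * ε :=
        mul_le_mul_of_nonneg_left hsup hLQ.le
      linarith
    have habs : |p x' x a₁ μ - p x' x a₂ μ| ≤ 0 := by
      by_contra hc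
      push_neg at hc
      have h1 := key (|p x' x a₁ μ - p x' x a₂ μ| / (2 * LQ)) (by positivity)
      rw [show LQ * (|p x' x a₁ μ - p x' x a₂ μ| / (2 * LQ)) =
        |p x' x a₁ μ - p x' x a₂ μ| / 2 by field_simp] at h1
      linarith
    have := abs_nonneg (p x' x a₁ μ - p x' x a₂ μ)
    have : |p x' x a₁ μ - p x' x a₂ μ| = 0 := le_antisymm habs this
    have := abs_eq_zero.1 this
    linarith
  -- Step 2: the equilibrium distribution μstar
  have hcont : ∀ x : 𝒳, Continuous (fun μ : PiLp 1 (fun _ : 𝒳 => ℝ) => μ x) :=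
    fun x => (continuous_apply x).comp (PiLp.continuous_ofLp 1 _)
  set S : Set (PiLp 1 (fun _ : 𝒳 => ℝ)) := {μ | IsProb μ} with hSdef
  have hSclosed : IsClosed S := by
    have hSeq : S = (⋂ x, {μ : PiLp 1 (fun _ : 𝒳 => ℝ) | 0 ≤ μ x}) ∩
        {μ : PiLp 1 (fun _ : 𝒳 => ℝ) | ∑ x, μ x = 1} := by
      ext μ; simp [hSdef, IsProb, Set.mem_iInter]
    rw [hSeq]
    exact (isClosed_iInter fun x => isClosed_le continuous_const (hcont x)).inter
      (isClosed_eq (continuous_finset_sum _ fun x _ => (hcont x)) continuous_const)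
  haveI : CompleteSpace ↥S := hSclosed.completeSpace_coe
  haveI : Nonempty ↥S := ⟨⟨WithLp.toLp 1 ν, hν⟩⟩
  set A : 𝒳 → 𝒜 := amin (fun _ _ => 0) with hAdef
  have hDoe0 : ∀ (μ : 𝒳 → ℝ), IsProb μ → ∀ x x', β * ν x' ≤ p x' x (A x) μ :=
    fun μ hμ x x' => hDoe (fun _ _ => 0) μ hμ x x'
  have hGisProb : ∀ μ : ↥S, IsProb (fun x' => ∑ x, (μ : 𝒳 → ℝ) x * p x' x (A x) (μ : 𝒳 → ℝ)) := by
    rintro ⟨μ, hμ⟩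
    constructor
    · intro x'
      exact Finset.sum_nonneg fun x _ => mul_nonneg (hμ.1 x) ((hp x (A x) μ).1 x')
    · rw [Finset.sum_comm]
      calc ∑ x, ∑ x', μ x * p x' x (A x) μ
          = ∑ x, μ x * ∑ x', p x' x (A x) μ := by simp [Finset.mul_sum]
        _ = 1 := by
            calc ∑ x, μ x * ∑ x', p x' x (A x) μ = ∑ x, μ x * 1 :=
                  Finset.sum_congr rfl fun x _ => by rw [(hp x (A x) μ).2]
              _ = 1 := by simpa using hμ.2
  set G : ↥S → ↥S := fun μ =>
    ⟨WithLp.toLp 1 (fun x' => ∑ x, (μ : 𝒳 → ℝ) x * p x' x (A x) (μ : 𝒳 → ℝ)), hGisProb μ⟩ with hGdef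
  have hdistX : ∀ μ₁ μ₂ : PiLp 1 (fun _ : 𝒳 => ℝ), dist μ₁ μ₂ = ∑ x, |μ₁ x - μ₂ x| := by
    intro μ₁ μ₂
    rw [PiLp.dist_eq_sum (by norm_num : 0 < (1 : ENNReal).toReal)]
    simp [Real.dist_eq]
  set κ := (1 - β) + Lp / 2 with hκdef
  have hκ0 : 0 ≤ κ := by rw [hκdef]; nlinarith [hβ.2, hLp.1]
  have hκ1 : κ < 1 := by rw [hκdef]; nlinarith [hβ.1]
  have hGcontr : ∀ μ₁ μ₂ : ↥S, dist (G μ₁) (G μ₂) ≤ κ * dist μ₁ μ₂ := by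
    rintro ⟨m₁, hm₁⟩ ⟨m₂, hm₂⟩
    rw [Subtype.dist_eq, Subtype.dist_eq, hdistX, hdistX]
    set D := ∑ x, |m₁ x - m₂ x| with hD
    have hΔsum : ∑ x, (m₁ x - m₂ x) = 0 := by
      rw [Finset.sum_sub_distrib, hm₁.2, hm₂.2]; ring
    have htv : tvNorm (fun y => m₁ y - m₂ y) ≤ D / 2 := by
      apply ciSup_le
      intro B
      have hsplit : ∑ x ∈ B, (m₁ x - m₂ x) + ∑ x ∈ Bᶜ, (m₁ x - m₂ x) = 0 := by
        rw [Finset.sum_add_sum_compl]; exact hΔsum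
      have h1 : |∑ x ∈ B, (m₁ x - m₂ x)| ≤ ∑ x ∈ B, |m₁ x - m₂ x| :=
        Finset.abs_sum_le_sum_abs _ _
      have h2 : |∑ x ∈ B, (m₁ x - m₂ x)| ≤ ∑ x ∈ Bᶜ, |m₁ x - m₂ x| := by
        have heq : ∑ x ∈ B, (m₁ x - m₂ x) = -∑ x ∈ Bᶜ, (m₁ x - m₂ x) := by linarith
        rw [heq, abs_neg]
        exact Finset.abs_sum_le_sum_abs _ _
      have h3 : ∑ x ∈ B, |m₁ x - m₂ x| + ∑ x ∈ Bᶜ, |m₁ x - m₂ x| = D := by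
        rw [Finset.sum_add_sum_compl]
      linarith
    have htv0 : Lp * tvNorm (fun y => m₁ y - m₂ y) ≤ Lp * (D / 2) :=
      mul_le_mul_of_nonneg_left htv hLp.1.le
    have hpt : ∀ x', |(∑ x, m₁ x * p x' x (A x) m₁) - ∑ x, m₂ x * p x' x (A x) m₂| ≤
        (∑ x, |m₁ x - m₂ x| * (p x' x (A x) m₂ - β * ν x'))
        + ∑ x, m₁ x * |p x' x (A x) m₁ - p x' x (A x) m₂| := by
      intro x'
      have hdec : (∑ x, m₁ x * p x' x (A x) m₁) - ∑ x, m₂ x * p x' x (A x) m₂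
          = (∑ x, (m₁ x - m₂ x) * (p x' x (A x) m₂ - β * ν x'))
            + ∑ x, m₁ x * (p x' x (A x) m₁ - p x' x (A x) m₂) := by
        have hterm : ∀ x ∈ univ, m₁ x * p x' x (A x) m₁ - m₂ x * p x' x (A x) m₂
            = ((m₁ x - m₂ x) * (p x' x (A x) m₂ - β * ν x')
              + m₁ x * (p x' x (A x) m₁ - p x' x (A x) m₂))
              + β * ν x' * (m₁ x - m₂ x) := fun x _ => by ring
        rw [← Finset.sum_sub_distrib, Finset.sum_congr rfl hterm, Finset.sum_add_distrib,
          Finset.sum_add_distrib, ← Finset.mul_sum, hΔsum, mul_zero, add_zero]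
      rw [hdec]
      refine (abs_add_le _ _).trans (add_le_add ?_ ?_)
      · refine (Finset.abs_sum_le_sum_abs _ _).trans (Finset.sum_le_sum fun x _ => ?_)
        rw [abs_mul, abs_of_nonneg (sub_nonneg.2 (hDoe0 m₂ hm₂ x x'))]
      · refine (Finset.abs_sum_le_sum_abs _ _).trans (Finset.sum_le_sum fun x _ => ?_)
        rw [abs_mul, abs_of_nonneg (hm₁.1 x)]
    calc ∑ x', |(∑ x, m₁ x * p x' x (A x) m₁) - ∑ x, m₂ x * p x' x (A x) m₂|
        ≤ ∑ x', ((∑ x, |m₁ x - m₂ x| * (p x' x (A x) m₂ - β * ν x'))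
          + ∑ x, m₁ x * |p x' x (A x) m₁ - p x' x (A x) m₂|) :=
          Finset.sum_le_sum fun x' _ => hpt x'
      _ = (∑ x, |m₁ x - m₂ x| * ∑ x', (p x' x (A x) m₂ - β * ν x'))
          + ∑ x, m₁ x * ∑ x', |p x' x (A x) m₁ - p x' x (A x) m₂| := by
          rw [Finset.sum_add_distrib]
          congr 1 <;> rw [Finset.sum_comm] <;>
            exact Finset.sum_congr rfl fun x _ => by rw [Finset.mul_sum]
      _ ≤ (∑ x, |m₁ x - m₂ x| * (1 - β)) + ∑ x, m₁ x * (Lp * (D / 2)) := by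
          apply add_le_add
          · apply le_of_eq
            refine Finset.sum_congr rfl fun x _ => ?_
            congr 1
            rw [Finset.sum_sub_distrib, (hp x (A x) m₂).2, ← Finset.mul_sum, hν.2, mul_one]
          · refine Finset.sum_le_sum fun x _ => mul_le_mul_of_nonneg_left ?_ (hm₁.1 x)
            exact (hplip x (A x) m₁ m₂ hm₁ hm₂).trans htv0
      _ = (1 - β) * D + Lp * (D / 2) := by
          rw [← Finset.sum_mul, ← Finset.sum_mul, hm₁.2, one_mul, mul_comm]
      _ = κ * D := by rw [hκdef]; ring
  have hGC : ContractingWith ⟨κ, hκ0⟩ G := by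
    constructor
    · exact_mod_cast hκ1
    · apply LipschitzWith.of_dist_le_mul
      intro a b
      exact_mod_cast hGcontr a b
  set μS := ContractingWith.fixedPoint G hGC with hμSdef
  have hGfix : G μS = μS := hGC.fixedPoint_isFixedPt
  set μstar : 𝒳 → ℝ := fun x => (μS : 𝒳 → ℝ) x with hμstardef
  have hμstarIsProb : IsProb μstar := μS.2
  have hμeq : ∀ x', ∑ x, μstar x * p x' x (A x) μstar = μstar x' :=
    fun x' => congrArg (fun μ : ↥S => (μ : PiLp 1 (fun _ : 𝒳 => ℝ)) x') hGfix
  -- Step 3: the Bellman fixed point Qstar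
  set T : (𝒳 → 𝒜 → ℝ) → (𝒳 → 𝒜 → ℝ) := fun Q x a =>
    h * f x a μstar + α * ∑ x', p x' x a μstar * (⨅ a', Q x' a') with hTdef
  have hTcontr : ∀ Q₁ Q₂, dist (T Q₁) (T Q₂) ≤ α * dist Q₁ Q₂ := by
    intro Q₁ Q₂
    have hd0 : 0 ≤ dist Q₁ Q₂ := dist_nonneg
    have had0 : 0 ≤ α * dist Q₁ Q₂ := mul_nonneg hα0.le hd0
    rw [dist_pi_le_iff had0]
    intro x
    rw [dist_pi_le_iff had0]
    intro a
    rw [Real.dist_eq]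
    have hinf : ∀ x', |(⨅ a', Q₁ x' a') - (⨅ a', Q₂ x' a')| ≤ dist Q₁ Q₂ := by
      intro x'
      apply abs_ciInf_sub_ciInf_le
      intro a'
      have h1 : dist (Q₁ x' a') (Q₂ x' a') ≤ dist (Q₁ x') (Q₂ x') := dist_le_pi_dist _ _ a'
      have h2 : dist (Q₁ x') (Q₂ x') ≤ dist Q₁ Q₂ := dist_le_pi_dist _ _ x'
      rw [Real.dist_eq] at h1
      linarith
    have hsplit : T Q₁ x a - T Q₂ x a
        = α * ∑ x', p x' x a μstar * ((⨅ a', Q₁ x' a') - (⨅ a', Q₂ x' a')) := by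
      have hsub : ∑ x', p x' x a μstar * ((⨅ a', Q₁ x' a') - (⨅ a', Q₂ x' a'))
          = (∑ x', p x' x a μstar * (⨅ a', Q₁ x' a'))
            - ∑ x', p x' x a μstar * (⨅ a', Q₂ x' a') := by
        rw [← Finset.sum_sub_distrib]
        exact Finset.sum_congr rfl fun _ _ => by ring
      simp only [hTdef]; rw [hsub]; ring
    rw [hsplit, abs_mul, abs_of_pos hα0]
    apply mul_le_mul_of_nonneg_left _ hα0.le
    calc |∑ x', p x' x a μstar * ((⨅ a', Q₁ x' a') - (⨅ a', Q₂ x' a'))|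
        ≤ ∑ x', p x' x a μstar * |(⨅ a', Q₁ x' a') - (⨅ a', Q₂ x' a')| := by
          refine (Finset.abs_sum_le_sum_abs _ _).trans (Finset.sum_le_sum fun x' _ => ?_)
          rw [abs_mul, abs_of_nonneg ((hp x a μstar).1 x')]
      _ ≤ ∑ x', p x' x a μstar * dist Q₁ Q₂ :=
          Finset.sum_le_sum fun x' _ =>
            mul_le_mul_of_nonneg_left (hinf x') ((hp x a μstar).1 x')
      _ = dist Q₁ Q₂ := by rw [← Finset.sum_mul, (hp x a μstar).2, one_mul]
  have hTC : ContractingWith ⟨α, hα0.le⟩ T := by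
    constructor
    · exact_mod_cast hα1
    · apply LipschitzWith.of_dist_le_mul
      intro a b
      exact_mod_cast hTcontr a b
  set Qstar := ContractingWith.fixedPoint T hTC with hQdef
  have hQfix : T Qstar = Qstar := hTC.fixedPoint_isFixedPt
  set C : Set (𝒳 → 𝒜 → ℝ) := {Q | ∀ x a, 0 ≤ Q x a ∧ Q x a ≤ M} with hCdef
  have hCclosed : IsClosed C := by
    have hCeq : C = ⋂ x, ⋂ a,
        ({Q : 𝒳 → 𝒜 → ℝ | 0 ≤ Q x a} ∩ {Q : 𝒳 → 𝒜 → ℝ | Q x a ≤ M}) := by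
      ext Q; simp [hCdef, Set.mem_iInter]
    rw [hCeq]
    refine isClosed_iInter fun x => isClosed_iInter fun a => IsClosed.inter ?_ ?_
    · exact isClosed_le continuous_const ((continuous_apply a).comp (continuous_apply x))
    · exact isClosed_le ((continuous_apply a).comp (continuous_apply x)) continuous_const
  have hTinv : ∀ Q ∈ C, T Q ∈ C := by
    intro Q hQ x a
    have hinflb : ∀ x', 0 ≤ ⨅ a', Q x' a' := fun x' => le_ciInf fun a' => (hQ x' a').1
    have hinfub : ∀ x', (⨅ a', Q x' a') ≤ M := fun x' =>
      (ciInf_le ((Set.finite_range _).bddBelow) (Classical.arbitrary 𝒜)).trans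
        (hQ x' (Classical.arbitrary 𝒜)).2
    constructor
    · have hs : 0 ≤ ∑ x', p x' x a μstar * (⨅ a', Q x' a') :=
        Finset.sum_nonneg fun x' _ => mul_nonneg ((hp x a μstar).1 x') (hinflb x')
      have hf0 := (hfb x a μstar).1
      simp only [hTdef]
      have := mul_nonneg hh.le hf0
      have := mul_nonneg hα0.le hs
      linarith
    · simp only [hTdef]
      have h1 : ∑ x', p x' x a μstar * (⨅ a', Q x' a') ≤ ∑ x', p x' x a μstar * M :=
        Finset.sum_le_sum fun x' _ =>
          mul_le_mul_of_nonneg_left (hinfub x') ((hp x a μstar).1 x')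
      have h2 : ∑ x', p x' x a μstar * M = M := by
        rw [← Finset.sum_mul, (hp x a μstar).2, one_mul]
      have h3 : h * f x a μstar ≤ h * F := mul_le_mul_of_nonneg_left (hfb x a μstar).2 hh.le
      have h4 : α * ∑ x', p x' x a μstar * (⨅ a', Q x' a') ≤ α * M := by
        apply mul_le_mul_of_nonneg_left _ hα0.le
        rw [← h2]; exact h1
      linarith [hMeq]
  have hQmem : Qstar ∈ C := by
    have h0C : (fun _ _ => 0 : 𝒳 → 𝒜 → ℝ) ∈ C := fun x a => ⟨le_refl 0, hM0⟩
    have hiter : ∀ n, T^[n] (fun _ _ => 0) ∈ C := by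
      intro n
      induction n with
      | zero => exact h0C
      | succ n ih => rw [Function.iterate_succ_apply']; exact hTinv _ ih
    exact hCclosed.mem_of_tendsto (hTC.tendsto_iterate_fixedPoint (fun _ _ => 0))
      (Filter.Eventually.of_forall hiter)
  refine ⟨Qstar, μstar, fun x a => hQmem x a, hμstarIsProb, fun x a => ?_, fun x' => ?_⟩
  · have := congrFun (congrFun hQfix x) a
    simp only [hTdef] at this
    exact this.symm
  · have hrw : ∀ x : 𝒳, p x' x (amin Qstar x) μstar = p x' x (A x) μstar := by
      intro x
      rw [hAdef]
      exact pind x (amin Qstar x) (amin (fun _ _ => 0) x) μstar hμstarIsProb x'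
    calc ∑ x, μstar x * p x' x (amin Qstar x) μstar
        = ∑ x, μstar x * p x' x (A x) μstar :=
          Finset.sum_congr rfl fun x _ => by rw [hrw x]
      _ = μstar x' := hμeq x'
end

section
/- (Difference between the discrete Q-function and the value function is O(h).) Let 𝒳, 𝒜 be finite sets, γ > 0 and 0 < h ≤ 1. Let V : 𝒳 → ℝ with |V(x)| ≤ M for all x, let f : 𝒳 × 𝒜 → ℝ with |f(x,a)| ≤ F, and for each (x,a) let p_h(·|x,a) be a probability distribution on 𝒳 satisfying the generator bound Σ_{x'} |p_h(x'|x,a) − 𝟙{x' = x}| ≤ C h for a constant C ≥ 0. Define Q(x,a) = h f(x,a) + e^{−γh} Σ_{x'} p_h(x'|x,a) V(x'). Then for every (x,a), |Q(x,a) − V(x)| ≤ (F + C M + γ M) h. -/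
open Finset

/-! Writing `Q(x,a) − V(x) = h f(x,a) + (e^{−γh} 𝔼_{p_h}[V] − V(x))`, the second term is the
discounted expectation of `V` compared with its value at the starting point: the distance of
`p_h(·|x,a)` from the point mass at `x` (at most `C h` in `ℓ¹`) costs `C M h`, and the discount
`1 − e^{−γh} ≤ γ h` costs `γ M h`. -/

section

variable {ι : Type*} [Fintype ι]

theorem abs_sum_mul_le_sum_abs_mul {w v : ι → ℝ} {M : ℝ} (hv : ∀ i, |v i| ≤ M) :
    |∑ i, w i * v i| ≤ (∑ i, |w i|) * M :=
  calc |∑ i, w i * v i| ≤ ∑ i, |w i| * |v i| := by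
        simpa only [abs_mul] using abs_sum_le_sum_abs (fun i => w i * v i) univ
    _ ≤ ∑ i, |w i| * M := by gcongr with i; exact hv i
    _ = (∑ i, |w i|) * M := (sum_mul ..).symm

variable [DecidableEq ι]

theorem sum_mul_eq_add_sum_sub_indicator_mul (p v : ι → ℝ) (x : ι) :
    ∑ i, p i * v i = v x + ∑ i, (p i - if i = x then 1 else 0) * v i := by
  simp [sub_mul, sum_sub_distrib]

theorem abs_discounted_sum_mul_sub_le {p v : ι → ℝ} {x : ι} {β M : ℝ}
    (hβ0 : 0 ≤ β) (hβ1 : β ≤ 1) (hv : ∀ i, |v i| ≤ M) :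
    |β * ∑ i, p i * v i - v x| ≤ (∑ i, |p i - if i = x then 1 else 0|) * M + (1 - β) * M := by
  set S := ∑ i, (p i - if i = x then 1 else 0) * v i
  have hS : |S| ≤ (∑ i, |p i - if i = x then 1 else 0|) * M := abs_sum_mul_le_sum_abs_mul hv
  have hβS : |β * S| ≤ |S| := by
    rw [abs_mul, abs_of_nonneg hβ0]
    exact mul_le_of_le_one_left (abs_nonneg S) hβ1
  have hdisc : |(β - 1) * v x| ≤ (1 - β) * M := by
    rw [abs_mul, abs_sub_comm, abs_of_nonneg (sub_nonneg.mpr hβ1)]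
    exact mul_le_mul_of_nonneg_left (hv x) (sub_nonneg.mpr hβ1)
  calc |β * ∑ i, p i * v i - v x| = |β * S + (β - 1) * v x| := by
        rw [sum_mul_eq_add_sum_sub_indicator_mul p v x]; congr 1; ring
    _ ≤ |β * S| + |(β - 1) * v x| := abs_add_le _ _
    _ ≤ _ := by linarith

end

theorem Q_minus_V_order_h_general {𝒳 𝒜 : Type*} [Fintype 𝒳] [DecidableEq 𝒳]
    (γ h M F C : ℝ) (hγ : 0 < γ) (hh : 0 < h ∧ h ≤ 1)
    (V : 𝒳 → ℝ) (hV : ∀ x, |V x| ≤ M)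
    (f : 𝒳 → 𝒜 → ℝ) (hf : ∀ x a, |f x a| ≤ F)
    (p : 𝒳 → 𝒳 → 𝒜 → ℝ)
    (hgen : ∀ x a, ∑ x', |p x' x a - (if x' = x then (1 : ℝ) else 0)| ≤ C * h)
    (Q : 𝒳 → 𝒜 → ℝ)
    (hQ : ∀ x a, Q x a = h * f x a + Real.exp (-γ * h) * ∑ x', p x' x a * V x') :
    ∀ x a, |Q x a - V x| ≤ (F + C * M + γ * M) * h := by
  intro x a
  have hh0 := hh.1
  have hM : 0 ≤ M := (abs_nonneg _).trans (hV x)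
  have hβ1 : Real.exp (-γ * h) ≤ 1 := Real.exp_le_one_iff.mpr (by nlinarith)
  have hβγ : 1 - Real.exp (-γ * h) ≤ γ * h := by linarith [Real.add_one_le_exp (-γ * h)]
  have hfh : |h * f x a| ≤ h * F := by
    rw [abs_mul, abs_of_pos hh0]
    exact mul_le_mul_of_nonneg_left (hf x a) hh0.le
  have hdisc := abs_discounted_sum_mul_sub_le (p := fun x' => p x' x a) (x := x)
    (Real.exp_pos _).le hβ1 hV
  calc |Q x a - V x|
      = |h * f x a + (Real.exp (-γ * h) * ∑ x', p x' x a * V x' - V x)| := by rw [hQ]; ring_nf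
    _ ≤ |h * f x a| + |Real.exp (-γ * h) * ∑ x', p x' x a * V x' - V x| := abs_add_le _ _
    _ ≤ h * F + (C * h * M + γ * h * M) := by
        grw [hfh, hdisc, hgen x a, hβγ]
    _ = (F + C * M + γ * M) * h := by ring

/-- The difference between the discrete-time Q-function and the value function is `O(h)`:
`|Q(x,a) − V(x)| ≤ (F + C M + γ M) h`. -/
theorem Q_minus_V_order_h {𝒳 𝒜 : Type*} [Fintype 𝒳] [Fintype 𝒜] [DecidableEq 𝒳]
    (γ h M F C : ℝ) (hγ : 0 < γ) (hh : 0 < h ∧ h ≤ 1) (hC : 0 ≤ C)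
    (V : 𝒳 → ℝ) (hV : ∀ x, |V x| ≤ M)
    (f : 𝒳 → 𝒜 → ℝ) (hf : ∀ x a, |f x a| ≤ F)
    (p : 𝒳 → 𝒳 → 𝒜 → ℝ)
    (hp : ∀ x a, IsProb (fun x' => p x' x a))
    (hgen : ∀ x a, ∑ x', |p x' x a - (if x' = x then (1 : ℝ) else 0)| ≤ C * h)
    (Q : 𝒳 → 𝒜 → ℝ)
    (hQ : ∀ x a, Q x a = h * f x a + Real.exp (-γ * h) * ∑ x', p x' x a * V x') :
    ∀ x a, |Q x a - V x| ≤ (F + C * M + γ * M) * h :=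
  Q_minus_V_order_h_general γ h M F C hγ hh V hV f hf p hgen Q hQ
end
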